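/- Let F be a number field acting on a finite-dimensional ℚ-vector space V (so V is a finite-dimensional F-vector space), and let U be an F-invariant ℂ-subspace of V ⊗_ℚ ℂ such that V ⊗_ℚ ℂ is the internal direct sum of U and σ(U). Assume V ≠ 0 and that the action is rigid: the only ℂ-linear map σ(U) → U commuting with the action of every element of F is zero. Then F is totally imaginary, and there exist a natural number n, a CM-type Φ of F, and an F-linear isomorphism f : V ≅ F^n such that the ℂ-linear extension f ⊗ id_ℂ : V ⊗_ℚ ℂ ≅ (F ⊗_ℚ ℂ)^n maps U onto (U_Φ)^n. -/

import Mathlib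

open scoped TensorProduct

noncomputable section

instance : RingHomSurjective (starRingEnd ℂ) :=
  ⟨fun z => ⟨star z, by simp⟩⟩

/-- Complex conjugation as a `ℚ`-linear map on `ℂ`. -/
def conjQLin : ℂ →ₗ[ℚ] ℂ where
  toFun z := (starRingEnd ℂ) z
  map_add' := by intros; simp
  map_smul' := by intro q z; simp [Rat.smul_def, map_mul]

/-- The antilinear involution `σ` on `ℂ ⊗[ℚ] V` determined by conjugation on the
first factor, packaged as a `starRingEnd ℂ`-semilinear map. -/
def sigmaV (V : Type*) [AddCommGroup V] [Module ℚ V] :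
    (ℂ ⊗[ℚ] V) →ₛₗ[starRingEnd ℂ] (ℂ ⊗[ℚ] V) where
  toFun := TensorProduct.map conjQLin LinearMap.id
  map_add' := map_add _
  map_smul' c x := by
    induction x using TensorProduct.induction_on with
    | zero => simp
    | tmul z v =>
        simp [TensorProduct.smul_tmul', smul_eq_mul, conjQLin, map_mul]
    | add x y hx hy =>
        simp only [smul_add, map_add]
        exact congrArg₂ (· + ·) hx hy

/-- `σ(U)`, the image of a `ℂ`-subspace `U` of `ℂ ⊗[ℚ] V` under the conjugation
involution; it is again a `ℂ`-subspace. -/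
def sigmaSub {V : Type*} [AddCommGroup V] [Module ℚ V]
    (U : Submodule ℂ (ℂ ⊗[ℚ] V)) : Submodule ℂ (ℂ ⊗[ℚ] V) :=
  U.map (sigmaV V)

/-- A `ℂ`-linear map `f : P → Q` between subspaces of `ℂ ⊗[ℚ] V` commutes with an
operator `T` of the ambient space. -/
def CommutesWith {V : Type*} [AddCommGroup V] [Module ℚ V]
    (P Q : Submodule ℂ (ℂ ⊗[ℚ] V)) (f : P →ₗ[ℂ] Q)
    (T : (ℂ ⊗[ℚ] V) →ₗ[ℂ] (ℂ ⊗[ℚ] V)) : Prop :=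
  ∀ (x : P) (hx : T ↑x ∈ P), (f ⟨T ↑x, hx⟩ : ℂ ⊗[ℚ] V) = T ↑(f x)

/-- `E` is a polarization of the weight-one rational Hodge structure `(V, U)`:
it is alternating, its `ℂ`-bilinear extension vanishes on `U × U`, and
`-i·E_ℂ(u, σ u)` is a positive real for every nonzero `u ∈ U`. -/
def IsPolarization {V : Type*} [AddCommGroup V] [Module ℚ V]
    (U : Submodule ℂ (ℂ ⊗[ℚ] V)) (E : V →ₗ[ℚ] V →ₗ[ℚ] ℚ) : Prop :=
  (∀ x : V, E x x = 0) ∧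
  (∀ u ∈ U, ∀ u' ∈ U, LinearMap.BilinForm.baseChange ℂ E u u' = 0) ∧
  (∀ u ∈ U, u ≠ 0 → ∃ r : ℝ, 0 < r ∧
    -Complex.I * LinearMap.BilinForm.baseChange ℂ E u (sigmaV V u) = (r : ℂ))


/-- A field is totally real if every ring homomorphism to `ℂ` has image in `ℝ`. -/
def IsTotallyRealField (F : Type*) [Field F] : Prop :=
  ∀ σ : F →+* ℂ, ∀ x : F, ∃ r : ℝ, σ x = (r : ℂ)

/-- A field is totally imaginary if it admits no real embedding. -/
def IsTotallyImaginary (F : Type*) [Field F] : Prop :=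
  IsEmpty (F →+* ℝ)

/-- A number field is a CM-field if it is totally imaginary and is a quadratic
extension of a totally real subfield. -/
def IsCMField (F : Type*) [Field F] : Prop :=
  IsTotallyImaginary F ∧
    ∃ K : Subfield F, IsTotallyRealField K ∧ Module.finrank K F = 2

/-- A CM-type on `F`: a set of embeddings `F → ℂ` containing exactly one of each
conjugate pair. -/
def IsCMType (F : Type*) [Field F] (Φ : Set (F →+* ℂ)) : Prop :=
  ∀ σ : F →+* ℂ, Xor' (σ ∈ Φ) (σ ∈ (fun τ : F →+* ℂ => (starRingEnd ℂ).comp τ) '' Φ)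

/-- The `ℂ`-algebra homomorphism `σ̃ : F ⊗_ℚ ℂ → ℂ` (realized on `ℂ ⊗[ℚ] F`)
induced by an embedding `σ : F → ℂ`, as a `ℂ`-linear map: `σ̃(z ⊗ x) = z·σ(x)`. -/
def sigmaTilde (F : Type*) [Field F] [Algebra ℚ F] (σ : F →+* ℂ) :
    (ℂ ⊗[ℚ] F) →ₗ[ℂ] ℂ :=
  TensorProduct.AlgebraTensorModule.lift
    { toFun := fun z => z • (RingHom.equivRatAlgHom F ℂ σ).toLinearMap
      map_add' := fun a b => add_smul a b _
      map_smul' := fun c z => by simp [mul_smul] }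

/-- The Hodge structure `U_Φ ⊆ ℂ ⊗[ℚ] F` associated with a CM-type `Φ`: the subspace
annihilated by `σ̃` for every embedding `σ ∉ Φ`. -/
def UPhi (F : Type*) [Field F] [Algebra ℚ F] (Φ : Set (F →+* ℂ)) :
    Submodule ℂ (ℂ ⊗[ℚ] F) :=
  ⨅ σ ∈ {σ : F →+* ℂ | σ ∉ Φ}, LinearMap.ker (sigmaTilde F σ)

/-- Scalar multiplication by `a : 𝒜` as a `ℚ`-linear endomorphism of `V`. -/
def smulLin (𝒜 : Type*) [CommRing 𝒜] [Algebra ℚ 𝒜]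
    (V : Type*) [AddCommGroup V] [Module ℚ V] [Module 𝒜 V] [IsScalarTower ℚ 𝒜 V]
    (a : 𝒜) : V →ₗ[ℚ] V where
  toFun v := a • v
  map_add' := smul_add a
  map_smul' q v := smul_comm a q v

/-!
The maps `σ̃` identify `ℂ ⊗ F` with `ℂ^{Hom(F, ℂ)}` (Dedekind's independence of characters), so
its primitive idempotents split `ℂ ⊗ V` into the eigenspaces `W_σ` of the `F`-action, and every
`F`-stable subspace is the sum of its intersections with the `W_σ`. If `U ∩ W_σ` and `σ(U) ∩ W_σ`
were both nonzero, a rank-one map `σ(U) → U ∩ W_σ` would contradict rigidity; since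
`ℂ ⊗ V = U ⊕ σ(U)` and `W_σ ≠ 0`, each `W_σ` lies in exactly one of `U` and `σ(U)`. Conjugation
carries `W_σ` onto `W_σ̄`, so `Φ = {σ | W_σ ⊆ U}` is a CM-type (hence no embedding is real), and
any `F`-basis of `V` carries `U = ⊕_{σ ∈ Φ} W_σ` onto `U_Φⁿ`.
-/

lemma linearIndependent_ringHom (R L : Type*) [Semiring R] [CommRing L] [IsDomain L] :
    LinearIndependent L (fun σ : R →+* L => (σ : R → L)) :=
  (linearIndependent_monoidHom R L).comp (fun σ : R →+* L => (σ : R →* L))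
    fun _ _ h => RingHom.ext fun x => DFunLike.congr_fun h x

section Embeddings

variable (F : Type*) [Field F]

@[simp] lemma sigmaTilde_tmul [Algebra ℚ F] (σ : F →+* ℂ) (z : ℂ) (x : F) :
    sigmaTilde F σ (z ⊗ₜ x) = z * σ x := by
  simp [sigmaTilde, RingHom.equivRatAlgHom, smul_eq_mul, RingHom.toRatAlgHom]

lemma sigmaTilde_mul [Algebra ℚ F] (σ : F →+* ℂ) (a b : ℂ ⊗[ℚ] F) :
    sigmaTilde F σ (a * b) = sigmaTilde F σ a * sigmaTilde F σ b := by
  have h : ∀ c, sigmaTilde F σ c = Algebra.TensorProduct.lift (Algebra.ofId ℂ ℂ)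
      σ.toRatAlgHom (fun _ _ => Commute.all _ _) c := fun c => by
    induction c using TensorProduct.induction_on <;> simp_all
  simp only [h, map_mul]

variable [NumberField F]

def sigmaTildePi : (ℂ ⊗[ℚ] F) →ₗ[ℂ] ((F →+* ℂ) → ℂ) :=
  LinearMap.pi (sigmaTilde F)

lemma sigmaTildePi_surjective : Function.Surjective (sigmaTildePi F) := by
  classical
  rw [← LinearMap.dualMap_injective_iff, injective_iff_map_eq_zero]
  intro φ hφ
  have hsum : ∑ σ : F →+* ℂ, φ (Pi.single σ 1) • (σ : F → ℂ) = 0 := funext fun x => by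
    have h := LinearMap.congr_fun hφ (1 ⊗ₜ x)
    rw [LinearMap.dualMap_apply, LinearMap.pi_apply_eq_sum_univ φ] at h
    have hsingle (σ : F →+* ℂ) : (fun τ => if σ = τ then 1 else 0) = Pi.single σ (1 : ℂ) := by
      ext τ; simp [Pi.single_apply, eq_comm]
    simpa [sigmaTildePi, hsingle, mul_comm] using h
  have hzero := Fintype.linearIndependent_iff.mp (linearIndependent_ringHom F ℂ) _ hsum
  exact LinearMap.pi_ext' fun σ => LinearMap.ext_ring (hzero σ)

lemma sigmaTildePi_bijective : Function.Bijective (sigmaTildePi F) := by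
  refine ⟨(LinearMap.injective_iff_surjective_of_finrank_eq_finrank ?_).mpr
    (sigmaTildePi_surjective F), sigmaTildePi_surjective F⟩
  rw [Module.finrank_baseChange, Module.finrank_pi, NumberField.Embeddings.card F ℂ]

lemma ext_sigmaTilde {a b : ℂ ⊗[ℚ] F} (h : ∀ σ, sigmaTilde F σ a = sigmaTilde F σ b) : a = b :=
  (sigmaTildePi_bijective F).1 (funext h)

end Embeddings

section Idempotents

variable (F : Type*) [Field F] [NumberField F]

open scoped Classical in
def embIdempotent (σ : F →+* ℂ) : ℂ ⊗[ℚ] F :=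
  (LinearEquiv.ofBijective _ (sigmaTildePi_bijective F)).symm (Pi.single σ 1)

open scoped Classical in
lemma sigmaTilde_embIdempotent (σ τ : F →+* ℂ) :
    sigmaTilde F τ (embIdempotent F σ) = (Pi.single σ 1 : (F →+* ℂ) → ℂ) τ :=
  congr_fun ((LinearEquiv.ofBijective _ (sigmaTildePi_bijective F)).apply_symm_apply _) τ

@[simp] lemma sigmaTilde_embIdempotent_self (σ : F →+* ℂ) :
    sigmaTilde F σ (embIdempotent F σ) = 1 := by
  classical
  simpa using sigmaTilde_embIdempotent F σ σ

lemma sigmaTilde_embIdempotent_of_ne {σ τ : F →+* ℂ} (h : τ ≠ σ) :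
    sigmaTilde F τ (embIdempotent F σ) = 0 := by
  classical
  simpa [h] using sigmaTilde_embIdempotent F σ τ

lemma embIdempotent_ne_zero (σ : F →+* ℂ) : embIdempotent F σ ≠ 0 := fun h => by
  simpa [h] using sigmaTilde_embIdempotent_self F σ

lemma sum_embIdempotent : ∑ σ : F →+* ℂ, embIdempotent F σ = 1 := by
  refine ext_sigmaTilde F fun τ => ?_
  rw [map_sum, Finset.sum_eq_single τ (fun σ _ h => sigmaTilde_embIdempotent_of_ne F h.symm)
    (by simp), Algebra.TensorProduct.one_def]
  simp

lemma mul_embIdempotent (a : ℂ ⊗[ℚ] F) (σ : F →+* ℂ) :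
    a * embIdempotent F σ = sigmaTilde F σ a • embIdempotent F σ := by
  refine ext_sigmaTilde F fun τ => ?_
  by_cases h : τ = σ
  · subst h; simp [sigmaTilde_mul]
  · simp [sigmaTilde_mul, sigmaTilde_embIdempotent_of_ne F h]

lemma embIdempotent_mul_eq_zero_iff (σ : F →+* ℂ) (b : ℂ ⊗[ℚ] F) :
    embIdempotent F σ * b = 0 ↔ sigmaTilde F σ b = 0 := by
  rw [mul_comm, mul_embIdempotent, smul_eq_zero, or_iff_left (embIdempotent_ne_zero F σ)]

end Idempotents

section Action

variable (F : Type*) [Field F] [Algebra ℚ F]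
variable (V : Type*) [AddCommGroup V] [Module ℚ V] [Module F V] [IsScalarTower ℚ F V]

def tensorAction : ℂ ⊗[ℚ] F →ₐ[ℂ] Module.End ℂ (ℂ ⊗[ℚ] V) :=
  Algebra.TensorProduct.lift (Algebra.ofId ℂ _)
    ((Module.End.baseChangeHom ℚ ℂ V).comp (Algebra.lsmul ℚ ℚ V))
    fun z _ => Algebra.commute_algebraMap_left z _

lemma tensorAction_tmul (z : ℂ) (x : F) :
    tensorAction F V (z ⊗ₜ x) = z • LinearMap.baseChange ℂ (smulLin F V x) := by
  refine (Algebra.TensorProduct.lift_tmul _ _ _ z x).trans ?_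
  rw [Algebra.ofId_apply, Algebra.algebraMap_eq_smul_one, smul_mul_assoc, one_mul]
  rfl

lemma tensorAction_one_tmul (x : F) :
    tensorAction F V (1 ⊗ₜ x) = LinearMap.baseChange ℂ (smulLin F V x) := by
  rw [tensorAction_tmul, one_smul]

lemma tensorAction_self (a b : ℂ ⊗[ℚ] F) : tensorAction F F a b = a * b := by
  induction a using TensorProduct.induction_on with
  | zero => simp
  | add a a' ha ha' => simp [ha, ha', add_mul]
  | tmul z x =>
    induction b using TensorProduct.induction_on with
    | zero => simp
    | add b b' hb hb' => simp [mul_add, hb, hb']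
    | tmul w y => simp [tensorAction_tmul, smulLin, TensorProduct.smul_tmul']

variable {V} in
lemma baseChange_tensorAction {V' : Type*} [AddCommGroup V'] [Module ℚ V'] [Module F V']
    [IsScalarTower ℚ F V'] (g : V →ₗ[F] V') (a : ℂ ⊗[ℚ] F) (m : ℂ ⊗[ℚ] V) :
    LinearMap.baseChange ℂ (g.restrictScalars ℚ) (tensorAction F V a m) =
      tensorAction F V' a (LinearMap.baseChange ℂ (g.restrictScalars ℚ) m) := by
  induction a using TensorProduct.induction_on with
  | zero => simp
  | add a a' ha ha' => simp [ha, ha']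
  | tmul z x =>
    induction m using TensorProduct.induction_on with
    | zero => simp
    | add m m' hm hm' => simp only [map_add, hm, hm']
    | tmul w v => simp [tensorAction_tmul, smulLin]

variable {F V} in
lemma tensorAction_mem {U : Submodule ℂ (ℂ ⊗[ℚ] V)}
    (hinv : ∀ x : F, ∀ v ∈ U, LinearMap.baseChange ℂ (smulLin F V x) v ∈ U)
    (a : ℂ ⊗[ℚ] F) {m : ℂ ⊗[ℚ] V} (hm : m ∈ U) : tensorAction F V a m ∈ U := by
  induction a using TensorProduct.induction_on with
  | zero => simp
  | add a a' ha ha' => simpa using U.add_mem ha ha'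
  | tmul z x => simpa [tensorAction_tmul] using U.smul_mem z (hinv x m hm)

def embEigenspace (σ : F →+* ℂ) : Submodule ℂ (ℂ ⊗[ℚ] V) :=
  ⨅ x : F, Module.End.eigenspace (LinearMap.baseChange ℂ (smulLin F V x)) (σ x)

variable {F V} in
lemma mem_embEigenspace {σ : F →+* ℂ} {m : ℂ ⊗[ℚ] V} :
    m ∈ embEigenspace F V σ ↔ ∀ x : F, LinearMap.baseChange ℂ (smulLin F V x) m = σ x • m := by
  simp [embEigenspace]

variable {F V} in
lemma tensorAction_of_mem_embEigenspace {σ : F →+* ℂ} {m : ℂ ⊗[ℚ] V}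
    (hm : m ∈ embEigenspace F V σ) (a : ℂ ⊗[ℚ] F) :
    tensorAction F V a m = sigmaTilde F σ a • m := by
  induction a using TensorProduct.induction_on with
  | zero => simp
  | add a a' ha ha' => simp [ha, ha', add_smul]
  | tmul z x => simp [tensorAction_tmul, mem_embEigenspace.mp hm x, mul_smul]

end Action

section Projections

variable (F : Type*) [Field F] [NumberField F]
variable (V : Type*) [AddCommGroup V] [Module ℚ V] [Module F V] [IsScalarTower ℚ F V]

def embProj (σ : F →+* ℂ) : Module.End ℂ (ℂ ⊗[ℚ] V) :=
  tensorAction F V (embIdempotent F σ)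

variable {F V}

lemma embProj_baseChange_smulLin (σ : F →+* ℂ) (x : F) (m : ℂ ⊗[ℚ] V) :
    embProj F V σ (LinearMap.baseChange ℂ (smulLin F V x) m) = σ x • embProj F V σ m := by
  rw [embProj, ← tensorAction_one_tmul, ← Module.End.mul_apply, ← map_mul, mul_comm,
    mul_embIdempotent, map_smul]
  simp

lemma embProj_mem_embEigenspace (σ : F →+* ℂ) (m : ℂ ⊗[ℚ] V) :
    embProj F V σ m ∈ embEigenspace F V σ := by
  refine mem_embEigenspace.mpr fun x => ?_
  rw [embProj, ← tensorAction_one_tmul, ← Module.End.mul_apply, ← map_mul,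
    mul_embIdempotent, map_smul]
  simp

lemma embProj_of_mem {σ : F →+* ℂ} {m : ℂ ⊗[ℚ] V} (hm : m ∈ embEigenspace F V σ) :
    embProj F V σ m = m := by
  rw [embProj, tensorAction_of_mem_embEigenspace hm, sigmaTilde_embIdempotent_self, one_smul]

lemma sum_embProj (m : ℂ ⊗[ℚ] V) : ∑ σ : F →+* ℂ, embProj F V σ m = m := by
  simp only [embProj, ← LinearMap.sum_apply, ← map_sum, sum_embIdempotent, map_one,
    Module.End.one_apply]

lemma embEigenspace_ne_bot [Nontrivial V] (σ : F →+* ℂ) : embEigenspace F V σ ≠ ⊥ := by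
  obtain ⟨v, hv⟩ := exists_ne (0 : V)
  let j := (LinearMap.toSpanSingleton F V v).restrictScalars ℚ
  have hj : Function.Injective (LinearMap.baseChange ℂ j) := by
    rw [LinearMap.baseChange_eq_ltensor]
    exact Module.Flat.lTensor_preserves_injective_linearMap j
      (smul_left_injective F hv)
  refine (Submodule.ne_bot_iff _).mpr ⟨embProj F V σ (1 ⊗ₜ v), embProj_mem_embEigenspace σ _, ?_⟩
  have : embProj F V σ (1 ⊗ₜ v) = LinearMap.baseChange ℂ j (embIdempotent F σ) := by
    rw [← mul_one (embIdempotent F σ), ← tensorAction_self, baseChange_tensorAction]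
    simp [embProj, Algebra.TensorProduct.one_def]
  rw [this, ← map_zero (LinearMap.baseChange ℂ j), hj.ne_iff]
  exact embIdempotent_ne_zero F σ

end Projections

section Conjugation

open NumberField.ComplexEmbedding

variable {F : Type*} [Field F] [Algebra ℚ F]
variable {V : Type*} [AddCommGroup V] [Module ℚ V] [Module F V] [IsScalarTower ℚ F V]

@[simp] lemma sigmaV_tmul (z : ℂ) (v : V) : sigmaV V (z ⊗ₜ v) = (starRingEnd ℂ) z ⊗ₜ v := rfl

@[simp] lemma sigmaV_sigmaV (m : ℂ ⊗[ℚ] V) : sigmaV V (sigmaV V m) = m := by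
  induction m using TensorProduct.induction_on with
  | zero => simp
  | tmul z v => simp
  | add m m' hm hm' => simp [hm, hm']

lemma mem_sigmaSub {U : Submodule ℂ (ℂ ⊗[ℚ] V)} {m : ℂ ⊗[ℚ] V} :
    m ∈ sigmaSub U ↔ sigmaV V m ∈ U := by
  refine ⟨?_, fun h => ⟨_, h, sigmaV_sigmaV m⟩⟩
  rintro ⟨u, hu, rfl⟩
  rwa [sigmaV_sigmaV]

lemma sigmaV_baseChange_smulLin (x : F) (m : ℂ ⊗[ℚ] V) :
    sigmaV V (LinearMap.baseChange ℂ (smulLin F V x) m) =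
      LinearMap.baseChange ℂ (smulLin F V x) (sigmaV V m) := by
  induction m using TensorProduct.induction_on with
  | zero => simp
  | tmul z v => simp [smulLin]
  | add m m' hm hm' => simp [hm, hm']

lemma sigmaV_mem_embEigenspace {σ : F →+* ℂ} {m : ℂ ⊗[ℚ] V} (hm : m ∈ embEigenspace F V σ) :
    sigmaV V m ∈ embEigenspace F V (conjugate σ) := by
  refine mem_embEigenspace.mpr fun x => ?_
  rw [← sigmaV_baseChange_smulLin, mem_embEigenspace.mp hm x, map_smulₛₗ]
  rfl

lemma embEigenspace_le_sigmaSub_iff {U : Submodule ℂ (ℂ ⊗[ℚ] V)} {σ : F →+* ℂ} :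
    embEigenspace F V σ ≤ sigmaSub U ↔ embEigenspace F V (conjugate σ) ≤ U := by
  refine ⟨fun h m hm => ?_, fun h m hm => mem_sigmaSub.mpr (h (sigmaV_mem_embEigenspace hm))⟩
  have hσ : conjugate (conjugate σ) = σ := star_star σ
  have := h (hσ ▸ sigmaV_mem_embEigenspace hm)
  rwa [mem_sigmaSub, sigmaV_sigmaV] at this

lemma baseChange_smulLin_mem_sigmaSub {U : Submodule ℂ (ℂ ⊗[ℚ] V)}
    (hinv : ∀ x : F, ∀ v ∈ U, LinearMap.baseChange ℂ (smulLin F V x) v ∈ U)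
    (x : F) {w : ℂ ⊗[ℚ] V} (hw : w ∈ sigmaSub U) :
    LinearMap.baseChange ℂ (smulLin F V x) w ∈ sigmaSub U := by
  rw [mem_sigmaSub, sigmaV_baseChange_smulLin]
  exact hinv x _ (mem_sigmaSub.mp hw)

end Conjugation

section Rigidity

variable {F : Type*} [Field F] [NumberField F]
variable {V : Type*} [AddCommGroup V] [Module ℚ V] [Module F V] [IsScalarTower ℚ F V]

lemma range_embProj (σ : F →+* ℂ) : LinearMap.range (embProj F V σ) = embEigenspace F V σ :=
  le_antisymm (LinearMap.range_le_iff_comap.mpr (eq_top_iff.mpr fun m _ =>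
    embProj_mem_embEigenspace σ m)) fun m hm => ⟨m, embProj_of_mem hm⟩

lemma map_embProj_le {U : Submodule ℂ (ℂ ⊗[ℚ] V)}
    (hinv : ∀ x : F, ∀ v ∈ U, LinearMap.baseChange ℂ (smulLin F V x) v ∈ U) (σ : F →+* ℂ) :
    U.map (embProj F V σ) ≤ U ⊓ embEigenspace F V σ := by
  rintro _ ⟨m, hm, rfl⟩
  exact ⟨tensorAction_mem hinv _ hm, embProj_mem_embEigenspace σ m⟩

lemma embEigenspace_le_sup_of_sup_eq_top {P Q : Submodule ℂ (ℂ ⊗[ℚ] V)}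
    (hP : ∀ x : F, ∀ v ∈ P, LinearMap.baseChange ℂ (smulLin F V x) v ∈ P)
    (hQ : ∀ x : F, ∀ v ∈ Q, LinearMap.baseChange ℂ (smulLin F V x) v ∈ Q)
    (hPQ : P ⊔ Q = ⊤) (σ : F →+* ℂ) :
    embEigenspace F V σ ≤ (P ⊓ embEigenspace F V σ) ⊔ (Q ⊓ embEigenspace F V σ) := by
  conv_lhs => rw [← range_embProj, LinearMap.range_eq_map, ← hPQ, Submodule.map_sup]
  exact sup_le_sup (map_embProj_le hP σ) (map_embProj_le hQ σ)

lemma inf_embEigenspace_eq_bot_or {U : Submodule ℂ (ℂ ⊗[ℚ] V)}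
    (hrigid : ∀ f : sigmaSub U →ₗ[ℂ] U,
      (∀ x : F, CommutesWith (sigmaSub U) U f
        (LinearMap.baseChange ℂ (smulLin F V x))) → f = 0)
    (σ : F →+* ℂ) :
    U ⊓ embEigenspace F V σ = ⊥ ∨ sigmaSub U ⊓ embEigenspace F V σ = ⊥ := by
  by_contra! h
  obtain ⟨u, ⟨hu, huσ⟩, hu0⟩ := (Submodule.ne_bot_iff _).mp h.1
  obtain ⟨w, ⟨hw, hwσ⟩, hw0⟩ := (Submodule.ne_bot_iff _).mp h.2
  obtain ⟨φ, hφ⟩ := Module.Projective.exists_dual_eq_one ℂ hw0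
  -- `w' ↦ φ (embProj σ w') • u` is `F`-equivariant because `u` is a `σ`-eigenvector
  let f : sigmaSub U →ₗ[ℂ] U :=
    (φ ∘ₗ embProj F V σ ∘ₗ (sigmaSub U).subtype).smulRight ⟨u, hu⟩
  have hf : ∀ x : F, CommutesWith (sigmaSub U) U f (LinearMap.baseChange ℂ (smulLin F V x)) := by
    intro x w' _
    simp [f, embProj_baseChange_smulLin, mem_embEigenspace.mp huσ, mul_smul, smul_comm (σ x)]
  have := congr_arg (fun g => (g ⟨w, hw⟩ : ℂ ⊗[ℚ] V)) (hrigid f hf)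
  simp [f, embProj_of_mem hwσ, hφ, hu0] at this

lemma embEigenspace_le_xor [Nontrivial V] {U : Submodule ℂ (ℂ ⊗[ℚ] V)}
    (hinv : ∀ x : F, ∀ v ∈ U, LinearMap.baseChange ℂ (smulLin F V x) v ∈ U)
    (hcompl : IsCompl U (sigmaSub U))
    (hrigid : ∀ f : sigmaSub U →ₗ[ℂ] U,
      (∀ x : F, CommutesWith (sigmaSub U) U f
        (LinearMap.baseChange ℂ (smulLin F V x))) → f = 0)
    (σ : F →+* ℂ) :
    Xor (embEigenspace F V σ ≤ U) (embEigenspace F V σ ≤ sigmaSub U) := by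
  have hle := embEigenspace_le_sup_of_sup_eq_top hinv
    (fun x _ => baseChange_smulLin_mem_sigmaSub hinv x) hcompl.sup_eq_top σ
  have hne_both : ¬ (embEigenspace F V σ ≤ U ∧ embEigenspace F V σ ≤ sigmaSub U) :=
    fun h => embEigenspace_ne_bot σ (eq_bot_iff.mpr (hcompl.inf_eq_bot ▸ le_inf h.1 h.2))
  rcases inf_embEigenspace_eq_bot_or hrigid σ with h | h <;> rw [h] at hle <;> simp at hle
  · exact .inr ⟨hle, fun h' => hne_both ⟨h', hle⟩⟩
  · exact .inl ⟨hle, fun h' => hne_both ⟨hle, h'⟩⟩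

lemma mem_iff_forall_embProj_eq_zero {U : Submodule ℂ (ℂ ⊗[ℚ] V)}
    (hinv : ∀ x : F, ∀ v ∈ U, LinearMap.baseChange ℂ (smulLin F V x) v ∈ U)
    (hcompl : IsCompl U (sigmaSub U))
    (hle : ∀ σ : F →+* ℂ, embEigenspace F V σ ≤ U ∨ embEigenspace F V σ ≤ sigmaSub U)
    (m : ℂ ⊗[ℚ] V) :
    m ∈ U ↔ ∀ σ : F →+* ℂ, ¬ embEigenspace F V σ ≤ U → embProj F V σ m = 0 := by
  refine ⟨fun hm σ hσ => ?_, fun h => ?_⟩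
  · have hσU := (hle σ).resolve_left hσ
    exact Submodule.disjoint_def.mp hcompl.disjoint _
      (tensorAction_mem hinv (embIdempotent F σ) hm) (hσU (embProj_mem_embEigenspace σ m))
  · rw [← sum_embProj (F := F) m]
    refine U.sum_mem fun σ _ => ?_
    by_cases hσ : embEigenspace F V σ ≤ U
    · exact hσ (embProj_mem_embEigenspace σ m)
    · simp [h σ hσ]

end Rigidity

section CMType

open NumberField.ComplexEmbedding

variable {F : Type*} [Field F]

lemma isCMType_iff {Φ : Set (F →+* ℂ)} :
    IsCMType F Φ ↔ ∀ σ : F →+* ℂ, Xor (σ ∈ Φ) (conjugate σ ∈ Φ) := by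
  have h : (fun τ : F →+* ℂ => (starRingEnd ℂ).comp τ) '' Φ = conjugate ⁻¹' Φ :=
    congr_fun (involutive_conjugate F).image_eq_preimage_symm Φ
  rw [IsCMType, h]
  rfl

lemma IsCMType.isEmpty_ringHom_real {Φ : Set (F →+* ℂ)} (h : IsCMType F Φ) :
    IsEmpty (F →+* ℝ) := by
  refine ⟨fun r => ?_⟩
  have hr : conjugate (Complex.ofRealHom.comp r) = Complex.ofRealHom.comp r :=
    RingHom.ext fun x => Complex.conj_ofReal _
  simpa [hr] using isCMType_iff.mp h (Complex.ofRealHom.comp r)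

lemma mem_UPhi_iff [Algebra ℚ F] {Φ : Set (F →+* ℂ)} {b : ℂ ⊗[ℚ] F} :
    b ∈ UPhi F Φ ↔ ∀ σ : F →+* ℂ, σ ∉ Φ → sigmaTilde F σ b = 0 := by
  simp [UPhi]

end CMType

section Comparison

variable {F : Type*} [Field F] [NumberField F]
variable {V : Type*} [AddCommGroup V] [Module ℚ V] [Module F V] [IsScalarTower ℚ F V]

lemma map_baseChange_eq_pi_UPhi {U : Submodule ℂ (ℂ ⊗[ℚ] V)} {Φ : Set (F →+* ℂ)}
    (hU : ∀ m, m ∈ U ↔ ∀ σ : F →+* ℂ, σ ∉ Φ → embProj F V σ m = 0)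
    {n : ℕ} (f : V ≃ₗ[F] (Fin n → F)) :
    Submodule.map
      ((TensorProduct.piRight ℚ ℂ ℂ (fun _ : Fin n => F)).toLinearMap ∘ₗ
        LinearMap.baseChange ℂ (f.toLinearMap.restrictScalars ℚ)) U =
      Submodule.pi Set.univ (fun _ => UPhi F Φ) := by
  let G := (LinearEquiv.baseChange ℚ ℂ V _ (f.restrictScalars ℚ)).trans
    (TensorProduct.piRight ℚ ℂ ℂ (fun _ : Fin n => F))
  have hG : ∀ m i, G m i =
      LinearMap.baseChange ℂ ((LinearMap.proj i ∘ₗ f.toLinearMap).restrictScalars ℚ) m := by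
    intro m i
    induction m using TensorProduct.induction_on with
    | zero => simp
    | add m m' hm hm' => simp only [map_add, Pi.add_apply, hm, hm']
    | tmul z v => simp [G]
  have hG_embProj : ∀ σ m i, G (embProj F V σ m) i = embIdempotent F σ * G m i := by
    intro σ m i
    rw [hG, embProj, baseChange_tensorAction, tensorAction_self, ← hG]
  have hUG : U = (Submodule.pi Set.univ fun _ => UPhi F Φ).comap G.toLinearMap := by
    ext m
    have hzero : ∀ σ, embProj F V σ m = 0 ↔ ∀ i, embIdempotent F σ * G m i = 0 := fun σ => by
      rw [← G.map_eq_zero_iff, funext_iff]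
      simp only [hG_embProj, Pi.zero_apply]
    simp only [hU, hzero, Submodule.mem_comap, Submodule.mem_pi, mem_UPhi_iff,
      ← embIdempotent_mul_eq_zero_iff, LinearEquiv.coe_coe]
    exact ⟨fun h i _ σ hσ => h σ hσ i, fun h σ hσ i => h i trivial σ hσ⟩
  rw [hUG]
  exact Submodule.map_comap_eq_of_surjective G.surjective _

end Comparison

/-- A rigid action of a number field `F` on a nonzero weight-one rational Hodge
structure forces `F` to be totally imaginary, and the Hodge structure to be isomorphic
to a power of the Hodge structure attached to a CM-type of `F`. -/
theorem rigid_numberField_action_isom_power_of_CMType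
    (F : Type*) [Field F] [NumberField F]
    (V : Type*) [AddCommGroup V] [Module ℚ V] [FiniteDimensional ℚ V] [Nontrivial V]
    [Module F V] [IsScalarTower ℚ F V]
    (U : Submodule ℂ (ℂ ⊗[ℚ] V))
    (hinv : ∀ x : F, ∀ v ∈ U, LinearMap.baseChange ℂ (smulLin F V x) v ∈ U)
    (hcompl : IsCompl U (sigmaSub U))
    (hrigid : ∀ f : sigmaSub U →ₗ[ℂ] U,
      (∀ x : F, CommutesWith (sigmaSub U) U f
        (LinearMap.baseChange ℂ (smulLin F V x))) → f = 0) :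
    IsEmpty (F →+* ℝ) ∧
      ∃ (n : ℕ) (Φ : Set (F →+* ℂ)), IsCMType F Φ ∧
        ∃ f : V ≃ₗ[F] (Fin n → F),
          Submodule.map
            ((TensorProduct.piRight ℚ ℂ ℂ (fun _ : Fin n => F)).toLinearMap ∘ₗ
              LinearMap.baseChange ℂ (f.toLinearMap.restrictScalars ℚ)) U =
            Submodule.pi Set.univ (fun _ => UPhi F Φ) := by
  have hxor := embEigenspace_le_xor hinv hcompl hrigid
  have hCM : IsCMType F {σ | embEigenspace F V σ ≤ U} :=
    isCMType_iff.mpr fun σ => by simpa [← embEigenspace_le_sigmaSub_iff] using hxor σ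
  have : Module.Finite F V := Module.Finite.of_restrictScalars_finite ℚ F V
  exact ⟨hCM.isEmpty_ringHom_real, _, _, hCM, (Module.finBasis F V).equivFun,
    map_baseChange_eq_pi_UPhi
      (mem_iff_forall_embProj_eq_zero hinv hcompl fun σ => (hxor σ).or) _⟩

end
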